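/- arXiv:2007.13013 — 3 statements merged into one kernel-verified Lean document; each statement's English description precedes it below -/
import Mathlib

section
/- Let κ₁, κ₂ be real with 0 < κ₁ < κ₂ and let b₁ = (|α|²-κ₁²)^{1/2}, b₂ = (|α|²-κ₂²)^{1/2} for α ∈ ℝ² with |α| > κ₂. Set χ = |α|² - b₁b₂ and μ > 0. Then the 3×3 Hermitian matrix M̂ = -½(M + M*), where M = (iμ/χ)·[[α₁²β₁₂ + β₂χ, α₁α₂β₁₂, α₁β₂β₁₂], [α₁α₂β₁₂, α₂²β₁₂ + β₂χ, α₂β₂β₁₂], [-α₁β₂β₁₂, -α₂β₂β₁₂, κ₂²β₂]], with β_j = i b_j and β₁₂ = β₁ - β₂, is positive definite. -/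
/-! The Hermitian part of the symbol splits as a rank-one term plus a multiple of the identity,
`-½ (M + Mᴴ) = (μ (b₁ - b₂) / χ) · v* v + μ b₂ · I` with `v = (α₁, α₂, i b₂)`, using only
`b₂² = |α|² - κ₂²` and `χ = |α|² - b₁ b₂`. In the evanescent regime `0 < b₂ < b₁` and `χ > 0`,
so the first term is positive semidefinite and the second positive definite. -/

open Complex Matrix ComplexOrder

noncomputable def elasticDtNSymbol (μ χ κ₂ α₁ α₂ : ℝ) (β₂ β₁₂ : ℂ) : Matrix (Fin 3) (Fin 3) ℂ :=
  (I * μ / χ) •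
    !![(α₁ : ℂ) ^ 2 * β₁₂ + β₂ * χ, (α₁ : ℂ) * α₂ * β₁₂, (α₁ : ℂ) * β₂ * β₁₂;
       (α₁ : ℂ) * α₂ * β₁₂, (α₂ : ℂ) ^ 2 * β₁₂ + β₂ * χ, (α₂ : ℂ) * β₂ * β₁₂;
       -((α₁ : ℂ) * β₂ * β₁₂), -((α₂ : ℂ) * β₂ * β₁₂), ((κ₂ ^ 2 : ℝ) : ℂ) * β₂]

theorem neg_half_elasticDtNSymbol_add_conjTranspose {μ χ κ₂ α₁ α₂ b₁ b₂ : ℝ}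
    (hb₂ : b₂ ^ 2 = α₁ ^ 2 + α₂ ^ 2 - κ₂ ^ 2) (hχ : χ = α₁ ^ 2 + α₂ ^ 2 - b₁ * b₂) (hχ₀ : χ ≠ 0)
    {M : Matrix (Fin 3) (Fin 3) ℂ}
    (hM : M = elasticDtNSymbol μ χ κ₂ α₁ α₂ (I * b₂) (I * b₁ - I * b₂)) :
    -(1 / 2 : ℂ) • (M + Mᴴ) =
      (μ * (b₁ - b₂) / χ) • vecMulVec (star ![(α₁ : ℂ), α₂, I * b₂]) ![(α₁ : ℂ), α₂, I * b₂] +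
        (μ * b₂) • (1 : Matrix (Fin 3) (Fin 3) ℂ) := by
  ext i j
  fin_cases i <;> fin_cases j <;>
    simp [hM, elasticDtNSymbol, vecMulVec, Complex.ext_iff, ← Complex.ofReal_pow] <;>
    field_simp <;>
    first
      | ring1
      | linear_combination (2 * μ * b₂) * (hb₂ - hχ)

open Complex Matrix ComplexOrder in
theorem stmt_5 (κ₁ κ₂ μ : ℝ) (hκ₁ : 0 < κ₁) (hκ : κ₁ < κ₂) (hμ : 0 < μ)
    (α₁ α₂ : ℝ) (hα : κ₂ ^ 2 < α₁ ^ 2 + α₂ ^ 2)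
    (b₁ b₂ χ : ℝ) (β₁ β₂ β₁₂ : ℂ)
    (hb₁ : b₁ = Real.sqrt (α₁ ^ 2 + α₂ ^ 2 - κ₁ ^ 2))
    (hb₂ : b₂ = Real.sqrt (α₁ ^ 2 + α₂ ^ 2 - κ₂ ^ 2))
    (hχ : χ = α₁ ^ 2 + α₂ ^ 2 - b₁ * b₂)
    (hβ₁ : β₁ = Complex.I * (b₁ : ℝ)) (hβ₂ : β₂ = Complex.I * (b₂ : ℝ))
    (hβ₁₂ : β₁₂ = β₁ - β₂)
    (M : Matrix (Fin 3) (Fin 3) ℂ)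
    (hM : M = (Complex.I * (μ : ℝ) / (χ : ℝ)) •
      !![(α₁ : ℂ) ^ 2 * β₁₂ + β₂ * (χ : ℝ), (α₁ : ℂ) * (α₂ : ℝ) * β₁₂, (α₁ : ℂ) * β₂ * β₁₂;
         (α₁ : ℂ) * (α₂ : ℝ) * β₁₂, (α₂ : ℂ) ^ 2 * β₁₂ + β₂ * (χ : ℝ), (α₂ : ℂ) * β₂ * β₁₂;
         -((α₁ : ℂ) * β₂ * β₁₂), -((α₂ : ℂ) * β₂ * β₁₂), (κ₂ ^ 2 : ℝ) * β₂]) :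
    (-(1 / 2 : ℂ) • (M + Mᴴ)).PosDef := by
  have hκ₁κ₂ : κ₁ ^ 2 < κ₂ ^ 2 := pow_lt_pow_left₀ hκ hκ₁.le two_ne_zero
  have hb₁_sq : b₁ ^ 2 = α₁ ^ 2 + α₂ ^ 2 - κ₁ ^ 2 := by rw [hb₁, Real.sq_sqrt (by linarith)]
  have hb₂_sq : b₂ ^ 2 = α₁ ^ 2 + α₂ ^ 2 - κ₂ ^ 2 := by rw [hb₂, Real.sq_sqrt (by linarith)]
  have hb₂_pos : 0 < b₂ := hb₂ ▸ Real.sqrt_pos.mpr (by linarith)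
  have hb₂_lt_b₁ : b₂ < b₁ := hb₁ ▸ hb₂ ▸ Real.sqrt_lt_sqrt (by linarith) (by linarith)
  have hχ_pos : 0 < χ := by nlinarith [pow_pos hκ₁ 2]
  subst hβ₁ hβ₂ hβ₁₂
  rw [neg_half_elasticDtNSymbol_add_conjTranspose hb₂_sq hχ hχ_pos.ne' hM]
  exact PosDef.posSemidef_add ((posSemidef_vecMulVec_star_self _).smul (by positivity))
    (PosDef.one.smul (by positivity))
end

section
/- Let ε > 0 and let φ : [a, b] → ℂ be continuously differentiable on an interval [a, b] with a < b. Then for any δ > 0, |φ(b)|² ≤ (δ⁻¹ + (b-a)⁻¹) ∫_a^b |φ(t)|² dt + δ ∫_a^b |φ'(t)|² dt. -/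
/-!
Young's inequality gives `(‖φ‖²)' = 2⟪φ, φ'⟫ ≤ δ⁻¹‖φ‖² + δ‖φ'‖²`, so integrating from `t` to `b`,
`‖φ b‖² ≤ ‖φ t‖² + ∫_a^b (δ⁻¹‖φ‖² + δ‖φ'‖²)` for every `t ∈ [a, b]`. Averaging over `t` turns
`‖φ t‖²` into `(b - a)⁻¹ ∫_a^b ‖φ‖²`.
-/

open Set intervalIntegral

theorem le_inv_sub_mul_integral_of_forall_le {a b c : ℝ} {f : ℝ → ℝ} (hab : a < b)
    (hf : IntervalIntegrable f MeasureTheory.volume a b) (h : ∀ t ∈ Icc a b, c ≤ f t) :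
    c ≤ (b - a)⁻¹ * ∫ t in a..b, f t := by
  have hmono := integral_mono_on hab.le intervalIntegrable_const hf h
  rw [integral_const, smul_eq_mul] at hmono
  rwa [le_inv_mul_iff₀ (sub_pos.2 hab)]

section

variable {E : Type*} [NormedAddCommGroup E] [InnerProductSpace ℝ E]

theorem two_mul_real_inner_le_inv_mul_add_mul {δ : ℝ} (hδ : 0 < δ) (u v : E) :
    2 * inner ℝ u v ≤ δ⁻¹ * ‖u‖ ^ 2 + δ * ‖v‖ ^ 2 :=
  calc 2 * inner ℝ u v ≤ 2 * (‖u‖ * ‖v‖) := by linarith [real_inner_le_norm u v]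
    _ = δ⁻¹ * ‖u‖ ^ 2 + δ * ‖v‖ ^ 2 - δ⁻¹ * (‖u‖ - δ * ‖v‖) ^ 2 := by
      field_simp
      ring
    _ ≤ δ⁻¹ * ‖u‖ ^ 2 + δ * ‖v‖ ^ 2 := sub_le_self _ (by positivity)

variable {a b δ : ℝ} {φ φ' : ℝ → E}

theorem sq_norm_sub_sq_norm_le_integral (hab : a ≤ b) (hδ : 0 < δ)
    (hderiv : ∀ t ∈ Icc a b, HasDerivAt φ (φ' t) t) (hcont : ContinuousOn φ' (Icc a b)) :
    ‖φ b‖ ^ 2 - ‖φ a‖ ^ 2 ≤ ∫ t in a..b, δ⁻¹ * ‖φ t‖ ^ 2 + δ * ‖φ' t‖ ^ 2 := by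
  have hφ : ContinuousOn φ (Icc a b) := HasDerivAt.continuousOn hderiv
  refine sub_le_integral_of_hasDeriv_right_of_le hab (hφ.norm.pow 2)
    (fun t ht => (hderiv t (Ioo_subset_Icc_self ht)).norm_sq.hasDerivWithinAt) ?_
    (fun t _ => two_mul_real_inner_le_inv_mul_add_mul hδ _ _)
  exact (((hφ.norm.pow 2).const_smul δ⁻¹).add ((hcont.norm.pow 2).const_smul δ)).integrableOn_Icc

theorem sq_norm_le_sq_norm_add_integral (hδ : 0 < δ)
    (hderiv : ∀ t ∈ Icc a b, HasDerivAt φ (φ' t) t) (hcont : ContinuousOn φ' (Icc a b))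
    {t : ℝ} (ht : t ∈ Icc a b) :
    ‖φ b‖ ^ 2 ≤ ‖φ t‖ ^ 2 + ∫ s in a..b, δ⁻¹ * ‖φ s‖ ^ 2 + δ * ‖φ' s‖ ^ 2 := by
  have hsub : Icc t b ⊆ Icc a b := Icc_subset_Icc_left ht.1
  have hφ : ContinuousOn φ (Icc a b) := HasDerivAt.continuousOn hderiv
  have hsq : ContinuousOn (fun s => δ⁻¹ * ‖φ s‖ ^ 2 + δ * ‖φ' s‖ ^ 2) (Icc a b) :=
    ((hφ.norm.pow 2).const_smul δ⁻¹).add ((hcont.norm.pow 2).const_smul δ)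
  have hmono : ∫ s in t..b, δ⁻¹ * ‖φ s‖ ^ 2 + δ * ‖φ' s‖ ^ 2 ≤
      ∫ s in a..b, δ⁻¹ * ‖φ s‖ ^ 2 + δ * ‖φ' s‖ ^ 2 :=
    integral_mono_interval ht.1 ht.2 le_rfl (Filter.Eventually.of_forall fun s => by positivity)
      (hsq.intervalIntegrable_of_Icc (ht.1.trans ht.2))
  linarith [sq_norm_sub_sq_norm_le_integral ht.2 hδ (fun s hs => hderiv s (hsub hs))
    (hcont.mono hsub)]

theorem sq_norm_right_le_integral (hab : a < b) (hδ : 0 < δ)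
    (hderiv : ∀ t ∈ Icc a b, HasDerivAt φ (φ' t) t) (hcont : ContinuousOn φ' (Icc a b)) :
    ‖φ b‖ ^ 2 ≤
      (δ⁻¹ + (b - a)⁻¹) * (∫ t in a..b, ‖φ t‖ ^ 2) + δ * ∫ t in a..b, ‖φ' t‖ ^ 2 := by
  have hφ_sq : IntervalIntegrable (fun t => ‖φ t‖ ^ 2) MeasureTheory.volume a b :=
    ((HasDerivAt.continuousOn hderiv).norm.pow 2).intervalIntegrable_of_Icc hab.le
  have hφ'_sq : IntervalIntegrable (fun t => ‖φ' t‖ ^ 2) MeasureTheory.volume a b :=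
    (hcont.norm.pow 2).intervalIntegrable_of_Icc hab.le
  have hsplit : ∫ t in a..b, δ⁻¹ * ‖φ t‖ ^ 2 + δ * ‖φ' t‖ ^ 2 =
      δ⁻¹ * (∫ t in a..b, ‖φ t‖ ^ 2) + δ * ∫ t in a..b, ‖φ' t‖ ^ 2 := by
    rw [integral_add (hφ_sq.const_mul _) (hφ'_sq.const_mul _), integral_const_mul,
      integral_const_mul]
  have haverage := le_inv_sub_mul_integral_of_forall_le hab hφ_sq fun t ht =>
    sub_le_iff_le_add.2 (hsplit ▸ sq_norm_le_sq_norm_add_integral hδ hderiv hcont ht)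
  linarith [add_mul δ⁻¹ (b - a)⁻¹ (∫ t in a..b, ‖φ t‖ ^ 2)]

end

theorem stmt_6_general (a b : ℝ) (hab : a < b)
    (φ φ' : ℝ → ℂ)
    (hderiv : ∀ t ∈ Set.Icc a b, HasDerivAt φ (φ' t) t)
    (hcont : ContinuousOn φ' (Set.Icc a b))
    (δ : ℝ) (hδ : 0 < δ) :
    ‖φ b‖ ^ 2 ≤
      (δ⁻¹ + (b - a)⁻¹) * ∫ t in a..b, ‖φ t‖ ^ 2 +
        δ * ∫ t in a..b, ‖φ' t‖ ^ 2 := by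
  set I := ∫ t in a..b, ‖φ t‖ ^ 2
  set J := ∫ t in a..b, ‖φ' t‖ ^ 2
  -- The body of the first integral in the goal extends over `+ δ * J`.
  have hconst : ∫ t in a..b, ‖φ t‖ ^ 2 + δ * J = I + (b - a) * (δ * J) := by
    rw [integral_add (f := fun t => ‖φ t‖ ^ 2)
      (((HasDerivAt.continuousOn hderiv).norm.pow 2).intervalIntegrable_of_Icc hab.le)
      intervalIntegrable_const, integral_const, smul_eq_mul]
  have hslack : 0 ≤ (b - a) * J :=
    mul_nonneg (sub_pos.2 hab).le (integral_nonneg hab.le fun t _ => by positivity)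
  calc ‖φ b‖ ^ 2 ≤ (δ⁻¹ + (b - a)⁻¹) * I + δ * J := sq_norm_right_le_integral hab hδ hderiv hcont
    _ ≤ (δ⁻¹ + (b - a)⁻¹) * I + δ * J + (b - a) * J := le_add_of_nonneg_right hslack
    _ = (δ⁻¹ + (b - a)⁻¹) * ∫ t in a..b, ‖φ t‖ ^ 2 + δ * J := by
      rw [hconst]
      field_simp [(sub_pos.2 hab).ne', hδ.ne']
      ring

theorem stmt_6 (ε : ℝ) (hε : 0 < ε) (a b : ℝ) (hab : a < b)
    (φ φ' : ℝ → ℂ)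
    (hderiv : ∀ t ∈ Set.Icc a b, HasDerivAt φ (φ' t) t)
    (hcont : ContinuousOn φ' (Set.Icc a b))
    (δ : ℝ) (hδ : 0 < δ) :
    ‖φ b‖ ^ 2 ≤
      (δ⁻¹ + (b - a)⁻¹) * ∫ t in a..b, ‖φ t‖ ^ 2 +
        δ * ∫ t in a..b, ‖φ' t‖ ^ 2 :=
  stmt_6_general a b hab φ φ' hderiv hcont δ hδ
end

section
/- Let κ₁, κ₂ with 0 < κ₁ < κ₂, α = (α₁, α₂) ∈ ℝ² with |α| > κ₂, b₁ = (|α|²-κ₁²)^{1/2}, b₂ = (|α|²-κ₂²)^{1/2}. Then |α₁²(b₁ - b₂)| ≤ |α₁|² (κ₂² - κ₁²)/(b₁ + b₂), and consequently the entry M₁₁ = (iμ/χ)(α₁²(β₁ - β₂) + β₂χ) of the elastic DtN matrix (with β_j = i b_j and χ = |α|² - b₁b₂) satisfies |M₁₁| ≤ C(κ₁, κ₂, μ)(1 + |α|). -/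
/-!
Write `s = |α|²`, `b₁ = √(s - κ₁²)`, `b₂ = √(s - κ₂²)` and `χ = s - b₁ b₂`. Rationalising gives
`b₁ - b₂ = (κ₂² - κ₁²) / (b₁ + b₂)`, and since `s (κ₂² - κ₁²)² ≤ κ₂⁴ (s - κ₁²)` this yields
`√s (b₁ - b₂) ≤ κ₂²`. By AM-GM `2 b₁ b₂ ≤ b₁² + b₂²`, so `χ ≥ (κ₁² + κ₂²) / 2 > κ₂² / 2`.
Since `β_j = i b_j`, the entry `M₁₁` is the real number `-μ (α₁² (b₁ - b₂) / χ + b₂)`, and the two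
bounds give `|M₁₁| ≤ μ (2 √s + √s) = 3 μ |α|`.
-/

open Complex

section Evanescent

variable {k₁ k₂ s : ℝ}

theorem sqrt_sub_sqrt_mul_sqrt_add_sqrt (h₁ : k₁ ≤ s) (h₂ : k₂ ≤ s) :
    (√(s - k₁) - √(s - k₂)) * (√(s - k₁) + √(s - k₂)) = k₂ - k₁ := by
  rw [mul_comm, ← sq_sub_sq, Real.sq_sqrt (sub_nonneg.mpr h₁), Real.sq_sqrt (sub_nonneg.mpr h₂),
    sub_sub_sub_cancel_left]

theorem abs_sq_mul_sqrt_sub_sqrt (a : ℝ) (hk : k₁ ≤ k₂) (hs : k₂ < s) :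
    |a ^ 2 * (√(s - k₁) - √(s - k₂))| = a ^ 2 * (k₂ - k₁) / (√(s - k₁) + √(s - k₂)) := by
  have hb₁ : 0 < √(s - k₁) := Real.sqrt_pos.mpr (by linarith)
  have hb : √(s - k₂) ≤ √(s - k₁) := Real.sqrt_le_sqrt (by linarith)
  have hprod := sqrt_sub_sqrt_mul_sqrt_add_sqrt (hk.trans hs.le) hs.le
  rw [abs_of_nonneg (mul_nonneg (sq_nonneg a) (sub_nonneg.mpr hb)), ← hprod,
    mul_div_assoc, mul_div_cancel_right₀ _ (by positivity)]

theorem sqrt_mul_sub_le_mul_sqrt (hk₁ : 0 ≤ k₁) (hk : k₁ ≤ k₂) (hs : k₂ ≤ s) :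
    √s * (k₂ - k₁) ≤ k₂ * √(s - k₁) := by
  have hs₀ : 0 ≤ s := by linarith
  rw [← pow_le_pow_iff_left₀ (by nlinarith [Real.sqrt_nonneg s])
    (mul_nonneg (hk₁.trans hk) (Real.sqrt_nonneg _)) two_ne_zero, mul_pow, mul_pow,
    Real.sq_sqrt hs₀, Real.sq_sqrt (by linarith)]
  -- the difference of the two sides is `k₁ (s (k₂ - k₁) + k₂ (s - k₂))`
  nlinarith [mul_nonneg hk₁ (add_nonneg (mul_nonneg hs₀ (sub_nonneg.mpr hk))
    (mul_nonneg (hk₁.trans hk) (sub_nonneg.mpr hs)))]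

theorem sqrt_mul_sqrt_sub_sqrt_le (hk₁ : 0 ≤ k₁) (hk : k₁ < k₂) (hs : k₂ ≤ s) :
    √s * (√(s - k₁) - √(s - k₂)) ≤ k₂ := by
  have hb₁ : 0 < √(s - k₁) := Real.sqrt_pos.mpr (by linarith)
  have hsum : 0 < √(s - k₁) + √(s - k₂) := by positivity
  have hprod := sqrt_sub_sqrt_mul_sqrt_add_sqrt (hk.le.trans hs) hs
  refine le_of_mul_le_mul_right ?_ hsum
  calc √s * (√(s - k₁) - √(s - k₂)) * (√(s - k₁) + √(s - k₂)) = √s * (k₂ - k₁) := by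
        rw [mul_assoc, hprod]
    _ ≤ k₂ * √(s - k₁) := sqrt_mul_sub_le_mul_sqrt hk₁ hk.le hs
    _ ≤ k₂ * (√(s - k₁) + √(s - k₂)) :=
        mul_le_mul_of_nonneg_left (le_add_of_nonneg_right (Real.sqrt_nonneg _)) (by linarith)

theorem add_le_two_mul_sub_sqrt_mul_sqrt (h₁ : k₁ ≤ s) (h₂ : k₂ ≤ s) :
    k₁ + k₂ ≤ 2 * (s - √(s - k₁) * √(s - k₂)) := by
  nlinarith [two_mul_le_add_sq (√(s - k₁)) (√(s - k₂)), Real.sq_sqrt (sub_nonneg.mpr h₁),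
    Real.sq_sqrt (sub_nonneg.mpr h₂)]

theorem sq_mul_sqrt_sub_sqrt_div_le {a : ℝ} (hk₁ : 0 ≤ k₁) (hk : k₁ < k₂) (hs : k₂ ≤ s)
    (ha : a ^ 2 ≤ s) :
    a ^ 2 * (√(s - k₁) - √(s - k₂)) / (s - √(s - k₁) * √(s - k₂)) ≤ 2 * √s := by
  have hk₂ : 0 < k₂ := hk₁.trans_lt hk
  have hχ := add_le_two_mul_sub_sqrt_mul_sqrt (hk.le.trans hs) hs
  have hb : √(s - k₂) ≤ √(s - k₁) := Real.sqrt_le_sqrt (by linarith)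
  rw [div_le_iff₀ (by linarith)]
  calc a ^ 2 * (√(s - k₁) - √(s - k₂)) ≤ √s * (√s * (√(s - k₁) - √(s - k₂))) := by
        rw [← mul_assoc, Real.mul_self_sqrt (hk₂.le.trans hs)]
        gcongr
    _ ≤ √s * k₂ := by gcongr; exact sqrt_mul_sqrt_sub_sqrt_le hk₁ hk hs
    _ ≤ 2 * √s * (s - √(s - k₁) * √(s - k₂)) := by nlinarith [Real.sqrt_nonneg s]

end Evanescent

theorem dtn_entry_eq_ofReal (μ a b₁ b₂ χ : ℝ) (hχ : χ ≠ 0) :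
    I * μ / χ * ((a : ℂ) ^ 2 * (I * b₁ - I * b₂) + I * b₂ * χ) =
      ((-(μ * (a ^ 2 * (b₁ - b₂) / χ + b₂)) : ℝ) : ℂ) := by
  have hχ' : (χ : ℂ) ≠ 0 := ofReal_ne_zero.mpr hχ
  push_cast
  field_simp
  ring_nf
  rw [I_sq]
  ring

theorem stmt_11 (κ₁ κ₂ μ : ℝ) (hκ₁ : 0 < κ₁) (hκ : κ₁ < κ₂) (hμ : 0 < μ) :
    (∀ α₁ α₂ : ℝ, κ₂ ^ 2 < α₁ ^ 2 + α₂ ^ 2 →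
      |α₁ ^ 2 * (Real.sqrt (α₁ ^ 2 + α₂ ^ 2 - κ₁ ^ 2) - Real.sqrt (α₁ ^ 2 + α₂ ^ 2 - κ₂ ^ 2))| ≤
        α₁ ^ 2 * (κ₂ ^ 2 - κ₁ ^ 2) /
          (Real.sqrt (α₁ ^ 2 + α₂ ^ 2 - κ₁ ^ 2) + Real.sqrt (α₁ ^ 2 + α₂ ^ 2 - κ₂ ^ 2))) ∧
    ∃ C : ℝ, 0 < C ∧ ∀ α₁ α₂ : ℝ, κ₂ ^ 2 < α₁ ^ 2 + α₂ ^ 2 →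
      ‖((Complex.I * (μ : ℝ) /
            ((α₁ ^ 2 + α₂ ^ 2 -
              Real.sqrt (α₁ ^ 2 + α₂ ^ 2 - κ₁ ^ 2) * Real.sqrt (α₁ ^ 2 + α₂ ^ 2 - κ₂ ^ 2) : ℝ) : ℂ)) *
          ((α₁ : ℂ) ^ 2 *
              (Complex.I * (Real.sqrt (α₁ ^ 2 + α₂ ^ 2 - κ₁ ^ 2) : ℝ) -
                Complex.I * (Real.sqrt (α₁ ^ 2 + α₂ ^ 2 - κ₂ ^ 2) : ℝ)) +
            Complex.I * (Real.sqrt (α₁ ^ 2 + α₂ ^ 2 - κ₂ ^ 2) : ℝ) *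
              ((α₁ ^ 2 + α₂ ^ 2 -
                Real.sqrt (α₁ ^ 2 + α₂ ^ 2 - κ₁ ^ 2) * Real.sqrt (α₁ ^ 2 + α₂ ^ 2 - κ₂ ^ 2) : ℝ) : ℂ)))‖ ≤
      C * (1 + Real.sqrt (α₁ ^ 2 + α₂ ^ 2)) := by
  have hk : κ₁ ^ 2 < κ₂ ^ 2 := by gcongr
  refine ⟨fun α₁ α₂ hs => (abs_sq_mul_sqrt_sub_sqrt α₁ hk.le hs).le, 3 * μ, by positivity,
    fun α₁ α₂ hs => ?_⟩
  set s := α₁ ^ 2 + α₂ ^ 2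
  have ha : α₁ ^ 2 ≤ s := le_add_of_nonneg_right (sq_nonneg α₂)
  have hχ : 0 < s - √(s - κ₁ ^ 2) * √(s - κ₂ ^ 2) := by
    linarith [add_le_two_mul_sub_sqrt_mul_sqrt (hk.le.trans hs.le) hs.le, sq_nonneg κ₁]
  have hb : √(s - κ₂ ^ 2) ≤ √s := Real.sqrt_le_sqrt (sub_le_self _ (sq_nonneg κ₂))
  have hA := sq_mul_sqrt_sub_sqrt_div_le (sq_nonneg κ₁) hk hs.le ha
  have hb₁₂ : 0 ≤ √(s - κ₁ ^ 2) - √(s - κ₂ ^ 2) := sub_nonneg.mpr (Real.sqrt_le_sqrt (by linarith))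
  rw [dtn_entry_eq_ofReal _ _ _ _ _ hχ.ne', norm_real, norm_neg,
    Real.norm_of_nonneg (by positivity)]
  calc _ ≤ μ * (2 * √s + √s) := by gcongr
    _ ≤ 3 * μ * (1 + √s) := by nlinarith
end
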